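/- Suppose v, w ∈ ℝ^n \ {0} and A ∈ GL_n(ℝ) satisfy A(Q_v(ξ,η)) = Q_w(Aξ, Aη) for all ξ, η ∈ ℝ^n. Then there exist c > 0 and an orthogonal matrix T ∈ O(n) such that A = c·T. -/

import Mathlib

open scoped RealInnerProductSpace

noncomputable section

/-- `ℝ^n` with the Euclidean inner product and norm. -/
abbrev E (n : ℕ) : Type := EuclideanSpace ℝ (Fin n)

/-- The symmetric bilinear map `Q_v(ξ,η) = ⟨ξ,η⟩·v − ⟨ξ,v⟩·η − ⟨η,v⟩·ξ`. -/
def Qv {n : ℕ} (v ξ η : E n) : E n := ⟪ξ, η⟫ • v - ⟪ξ, v⟫ • η - ⟪η, v⟫ • ξ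

/-- The bracket `[Q,Q']` of two (symmetric bilinear) maps. -/
def brk {n : ℕ} (Q Q' : E n → E n → E n) (ξ η θ : E n) : E n :=
  (Q ξ (Q' η θ) + Q η (Q' θ ξ) + Q θ (Q' ξ η))
    - (Q' ξ (Q η θ) + Q' η (Q θ ξ) + Q' θ (Q ξ η))

/-- A map `ℝ^n × ℝ^n → ℝ^n` is a symmetric bilinear map. -/
def IsSymmBilin {n : ℕ} (q : E n → E n → E n) : Prop :=
  (∀ ξ η, q ξ η = q η ξ) ∧ ∀ ξ, IsLinearMap ℝ (q ξ)

/-- The standard basis vectors `e_1, …, e_n` of `ℝ^n`. -/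
def stdE (n : ℕ) (i : Fin n) : E n := EuclideanSpace.single i 1

/-- The `i`-th component of `L^Φ_B (A', B')`, where `v = v_i` is the `i`-th column of `B`
and `ω = ω_i` the `i`-th column of `B'`. -/
def LPhiC {n : ℕ} (A' : E n →ₗ[ℝ] E n) (v ω : E n) (ξ η : E n) : E n :=
  A' (Qv v ξ η) - Qv v (A' ξ) η - Qv v ξ (A' η) + Qv ω ξ η

/-- `(q_1,…,q_n)` lies in the kernel of `L^Ψ_B`, where `v i` are the columns of `B`. -/
def KerPsi {n : ℕ} (v : Fin n → E n) (q : Fin n → E n → E n → E n) : Prop :=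
  ∀ i j : Fin n, i < j → ∀ ξ η θ : E n,
    brk (q i) (Qv (v j)) ξ η θ = brk (q j) (Qv (v i)) ξ η θ

/-- `(q_1,…,q_n)` lies in the subspace `W`; `i0` is the index of the first coordinate. -/
def memW {n : ℕ} (i0 : Fin n) (q : Fin n → E n → E n → E n) : Prop :=
  (∀ j, q j (stdE n j) (stdE n j) = 0) ∧
  (∀ i j, ⟪stdE n i, q j (stdE n i) (stdE n i)⟫ + ⟪stdE n j, q i (stdE n j) (stdE n j)⟫ = 0) ∧
  (∀ j, ⟪stdE n i0, q i0 (stdE n j) (stdE n j)⟫ = 0)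

/-! Evaluating the relation at `(v, v)`, where `Q_v(v, v) = -‖v‖² v`, forces `‖Av‖² w = ‖v‖² Av`.
Evaluating it at `(ξ, ξ)` with `ξ ⊥ v`, where `Q_v(ξ, ξ) = ‖ξ‖² v`, then shows that `A` maps `v^⊥`
into `(Av)^⊥` and stretches it by the same factor `‖Av‖ / ‖v‖` as the line `ℝv`; by Pythagoras `A`
stretches every vector by that factor, so it is that multiple of a linear isometry. -/

section Conformal

variable {F G : Type*} [NormedAddCommGroup F] [InnerProductSpace ℝ F]
  [NormedAddCommGroup G] [InnerProductSpace ℝ G]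

theorem LinearMap.mul_norm_sq_map_of_forall_inner_eq_zero {A : F →ₗ[ℝ] G} {v : F} {a b : ℝ}
    (hv : a * ‖A v‖ ^ 2 = b * ‖v‖ ^ 2)
    (horth : ∀ ξ, ⟪ξ, v⟫ = 0 → ⟪A ξ, A v⟫ = 0 ∧ a * ‖A ξ‖ ^ 2 = b * ‖ξ‖ ^ 2) (x : F) :
    a * ‖A x‖ ^ 2 = b * ‖x‖ ^ 2 := by
  obtain ⟨y, hy, ξ, hξ, rfl⟩ := (ℝ ∙ v).exists_add_mem_mem_orthogonal x
  obtain ⟨t, rfl⟩ := Submodule.mem_span_singleton.mp hy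
  have hξv : ⟪ξ, v⟫ = 0 := Submodule.mem_orthogonal_singleton_iff_inner_left.mp hξ
  obtain ⟨hAξ, hnorm⟩ := horth ξ hξv
  have hξv' : ⟪v, ξ⟫ = 0 := by rwa [real_inner_comm]
  have hAξ' : ⟪A v, A ξ⟫ = 0 := by rwa [real_inner_comm]
  rw [map_add, map_smul, norm_add_sq_real, norm_add_sq_real]
  simp only [norm_smul, mul_pow, Real.norm_eq_abs, sq_abs, real_inner_smul_left, hξv', hAξ']
  linear_combination t ^ 2 * hv + hnorm

theorem LinearMap.exists_linearIsometryEquiv_of_norm_map {A : F →ₗ[ℝ] G}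
    (hA : Function.Bijective A) {c : ℝ} (hc : 0 < c) (hnorm : ∀ x, ‖A x‖ = c * ‖x‖) :
    ∃ T : F ≃ₗᵢ[ℝ] G, ∀ x, A x = c • T x := by
  let T : F ≃ₗ[ℝ] G := (LinearEquiv.ofBijective A hA).trans
    (LinearEquiv.smulOfNeZero ℝ G c⁻¹ (inv_ne_zero hc.ne'))
  refine ⟨{ T with norm_map' := fun x => ?_ }, fun x => ?_⟩
  · change ‖c⁻¹ • A x‖ = ‖x‖
    rw [norm_smul, hnorm, Real.norm_of_nonneg (inv_nonneg.mpr hc.le), inv_mul_cancel_left₀ hc.ne']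
  · change A x = c • c⁻¹ • A x
    rw [smul_inv_smul₀ hc.ne']

end Conformal

namespace Qv

variable {n : ℕ}

theorem self_right (v ξ : E n) : Qv v ξ v = -‖v‖ ^ 2 • ξ := by
  rw [Qv, real_inner_self_eq_norm_sq]
  module

theorem self_self (v ξ : E n) : Qv v ξ ξ = ‖ξ‖ ^ 2 • v - (2 * ⟪ξ, v⟫) • ξ := by
  rw [Qv, real_inner_self_eq_norm_sq]
  module

theorem self_self_of_inner_eq_zero {v ξ : E n} (hξ : ⟪ξ, v⟫ = 0) : Qv v ξ ξ = ‖ξ‖ ^ 2 • v := by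
  rw [self_self, hξ, mul_zero, zero_smul, sub_zero]

end Qv

section Intertwining

variable {n : ℕ} {v w : E n} {A : E n →ₗ[ℝ] E n}

theorem norm_sq_smul_eq_smul_of_map_Qv (h : ∀ ξ η, A (Qv v ξ η) = Qv w (A ξ) (A η))
    (hAv : A v ≠ 0) : ‖A v‖ ^ 2 • w = ‖v‖ ^ 2 • A v := by
  have hvv := h v v
  rw [Qv.self_right, map_smul, Qv.self_self] at hvv
  have hinner : ⟪A v, w⟫ = ‖v‖ ^ 2 := by
    have := congrArg (⟪A v, ·⟫) hvv
    simp only [inner_sub_right, real_inner_smul_right,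
      real_inner_self_eq_norm_sq] at this
    have hpos : ‖A v‖ ^ 2 ≠ 0 := by positivity
    apply mul_left_cancel₀ hpos
    linear_combination this
  rw [hinner] at hvv
  linear_combination (norm := module) -hvv

theorem map_orthogonal_of_map_Qv (h : ∀ ξ η, A (Qv v ξ η) = Qv w (A ξ) (A η))
    (hAv : A v ≠ 0) {ξ : E n} (hξ : ⟪ξ, v⟫ = 0) :
    ⟪A ξ, A v⟫ = 0 ∧ ‖v‖ ^ 2 * ‖A ξ‖ ^ 2 = ‖A v‖ ^ 2 * ‖ξ‖ ^ 2 := by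
  have hw := norm_sq_smul_eq_smul_of_map_Qv h hAv
  have hξξ := h ξ ξ
  rw [Qv.self_self_of_inner_eq_zero hξ, map_smul, Qv.self_self] at hξξ
  have hw' : ‖A v‖ ^ 2 * ⟪A ξ, w⟫ = ‖v‖ ^ 2 * ⟪A ξ, A v⟫ := by
    rw [← real_inner_smul_right, hw, real_inner_smul_right]
  have hξξ_scaled : (‖A v‖ ^ 2 * ‖ξ‖ ^ 2) • A v
      = (‖v‖ ^ 2 * ‖A ξ‖ ^ 2) • A v - (2 * ‖v‖ ^ 2 * ⟪A ξ, A v⟫) • A ξ := by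
    linear_combination (norm := module) ‖A v‖ ^ 2 • hξξ + ‖A ξ‖ ^ 2 • hw - (2 * hw') • A ξ
  have hAvAv : 0 < ‖A v‖ ^ 2 := by positivity
  have hAξ := congrArg (⟪A ξ, ·⟫) hξξ_scaled
  have hAv' := congrArg (⟪A v, ·⟫) hξξ_scaled
  simp only [inner_sub_right, real_inner_smul_right, real_inner_self_eq_norm_sq,
    real_inner_comm (A ξ) (A v)] at hAξ hAv'
  have horth : ⟪A ξ, A v⟫ = 0 := by
    rcases eq_or_ne ξ 0 with rfl | hξ0
    · simp
    · have hfac : ⟪A ξ, A v⟫ * (‖A v‖ ^ 2 * ‖ξ‖ ^ 2 + ‖v‖ ^ 2 * ‖A ξ‖ ^ 2) = 0 := by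
        linear_combination hAξ
      exact (mul_eq_zero.mp hfac).resolve_right (by positivity)
  refine ⟨horth, mul_left_cancel₀ hAvAv.ne' ?_⟩
  rw [horth] at hAv'
  linear_combination -hAv'

end Intertwining

theorem stmt11_general {n : ℕ} (v w : E n) (hv : v ≠ 0)
    (A : E n →ₗ[ℝ] E n) (hA : Function.Bijective A)
    (h : ∀ ξ η : E n, A (Qv v ξ η) = Qv w (A ξ) (A η)) :
    ∃ c : ℝ, 0 < c ∧ ∃ T : E n ≃ₗᵢ[ℝ] E n, ∀ x, A x = c • T x := by
  have hAv : A v ≠ 0 := (map_ne_zero_iff A hA.injective).mpr hv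
  have hsq : ∀ x, ‖v‖ ^ 2 * ‖A x‖ ^ 2 = ‖A v‖ ^ 2 * ‖x‖ ^ 2 :=
    A.mul_norm_sq_map_of_forall_inner_eq_zero (mul_comm _ _)
      fun ξ hξ => map_orthogonal_of_map_Qv h hAv hξ
  have hnorm : ∀ x, ‖A x‖ = ‖A v‖ / ‖v‖ * ‖x‖ := fun x => by
    have hmul : ‖v‖ * ‖A x‖ = ‖A v‖ * ‖x‖ := by
      rw [← sq_eq_sq₀ (by positivity) (by positivity), mul_pow, mul_pow, hsq]
    field_simp
    linear_combination hmul
  exact ⟨_, by positivity, A.exists_linearIsometryEquiv_of_norm_map hA (by positivity) hnorm⟩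

/-- Lemma `lemma:commutes`: if `v, w ≠ 0` and the invertible linear map `A`
satisfies `A(Q_v(ξ,η)) = Q_w(Aξ, Aη)` for all `ξ, η`, then `A = c·T` for some `c > 0` and
some orthogonal transformation `T ∈ O(n)`. -/
theorem stmt11 {n : ℕ} (v w : E n) (hv : v ≠ 0) (hw : w ≠ 0)
    (A : E n →ₗ[ℝ] E n) (hA : Function.Bijective A)
    (h : ∀ ξ η : E n, A (Qv v ξ η) = Qv w (A ξ) (A η)) :
    ∃ c : ℝ, 0 < c ∧ ∃ T : E n ≃ₗᵢ[ℝ] E n, ∀ x, A x = c • T x :=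
  stmt11_general v w hv A hA h
end
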